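/- arXiv:2212.04746 — 3 statements merged into one kernel-verified Lean document; each statement's English description precedes it below -/
import Mathlib

section
/- Let p ≥ 1, m_j ≥ 2 for all j, v, w > 0, and let x_1,…,x_n ∈ Ω_p be observations. Let q be a prior p.m.f. on Ω_p of product form q(c) = ∏_{j=1}^p q_j(c_j) with each q_j a p.m.f. on {1,…,m_j}. For c ∈ Ω_p and j, set s_j(c) = #{i : x_{ij} = c_j}. Assume the attributes' scale parameters σ_1,…,σ_p are independent with densities f_j(σ_j | v,w) = h^{(j)}_{v,w}(σ_j)/I_j(v,w) (HIG kernels built with m = m_j). Then the marginal likelihood of the data has the closed form ∑_{c ∈ Ω_p} q(c) ∫_{(0,∞)^p} ∏_{i=1}^n p(x_i | c, σ) · ∏_{j=1}^p f_j(σ_j | v,w) dσ = ∑_{c ∈ Ω_p} ∏_{j=1}^p q_j(c_j) · I_j(v + s_j(c), w + n − s_j(c)) / I_j(v, w). -/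
/-!
The HIG kernel is conjugate to the Hamming likelihood. For a fixed center `c`, the `n`
observations contribute, in attribute `j`, the factor
`(1 + (m_j - 1) e^{-1/σ_j})^{-n} e^{-(n - s_j(c))/σ_j}`, and multiplying `h_{v,w}` by it gives
exactly `h_{v + s_j, w + n - s_j}`. So the integrand is a product of functions of the separate
coordinates `σ_j`, and by Fubini the integral over `(0, ∞)^p` is the product of the
one-dimensional integrals `I_j(v + s_j, w + n - s_j) / I_j(v, w)`.
-/

open MeasureTheory

/-- The Hamming probability mass function on `Ω_p = Π j, Fin (m j)` with center `c`
and scale `σ`. -/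
noncomputable def hammingPMF {p : ℕ} (m : Fin p → ℕ)
    (c x : Π j : Fin p, Fin (m j)) (σ : Fin p → ℝ) : ℝ :=
  (∏ j : Fin p, (1 + ((m j : ℝ) - 1) * Real.exp (-1 / σ j)))⁻¹ *
    Real.exp (-∑ j : Fin p, (1 - if x j = c j then (1 : ℝ) else 0) / σ j)

/-- The Hypergeometric Inverse Gamma (HIG) kernel on `(0, ∞)` for an attribute with
`m` modalities and parameters `v, w`. -/
noncomputable def higKernel (m : ℕ) (v w : ℝ) (σ : ℝ) : ℝ :=
  (1 + ((m : ℝ) - 1) * Real.exp (-1 / σ)) ^ (-(v + w)) * Real.exp (-(w + 1) / σ) / σ ^ 2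

/-- The normalizing constant `I_j(v, w)` of the HIG kernel with `m` modalities. -/
noncomputable def higConst (m : ℕ) (v w : ℝ) : ℝ :=
  ∫ σ in Set.Ioi (0 : ℝ), higKernel m v w σ

lemma one_add_mul_exp_neg_one_div_pos (m : ℕ) {σ : ℝ} (hσ : 0 < σ) :
    0 < 1 + ((m : ℝ) - 1) * Real.exp (-1 / σ) := by
  have hexp_lt_one : Real.exp (-1 / σ) < 1 :=
    Real.exp_lt_one_iff.mpr (div_neg_of_neg_of_pos neg_one_lt_zero hσ)
  have hm : (0 : ℝ) ≤ m := m.cast_nonneg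
  nlinarith [Real.exp_pos (-1 / σ)]

lemma higKernel_conjugate (m : ℕ) (v w s : ℝ) (n : ℕ) {σ : ℝ} (hσ : 0 < σ) :
    ((1 + ((m : ℝ) - 1) * Real.exp (-1 / σ))⁻¹) ^ n * Real.exp (-(((n : ℝ) - s) / σ)) *
        higKernel m v w σ
      = higKernel m (v + s) (w + n - s) σ := by
  unfold higKernel
  set A := 1 + ((m : ℝ) - 1) * Real.exp (-1 / σ)
  have hA : 0 < A := one_add_mul_exp_neg_one_div_pos m hσ
  have hpow : A ^ (-(v + s + (w + n - s))) = A ^ (-(v + w)) * (A⁻¹) ^ n := by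
    rw [show -(v + s + (w + n - s)) = -(v + w) + -(n : ℝ) by ring, Real.rpow_add hA,
      Real.rpow_neg hA.le (n : ℝ), Real.rpow_natCast, inv_pow]
  have hexp : Real.exp (-(w + n - s + 1) / σ)
      = Real.exp (-(((n : ℝ) - s) / σ)) * Real.exp (-(w + 1) / σ) := by
    rw [← Real.exp_add]; ring_nf
  rw [hpow, hexp]
  ring

lemma sum_one_sub_ite_eq_sub_card {n : ℕ} {α : Type*} [DecidableEq α] (f : Fin n → α) (a : α) :
    ∑ i, (1 - if f i = a then (1 : ℝ) else 0) = n - (Finset.univ.filter fun i => f i = a).card := by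
  simp [Finset.sum_sub_distrib]

lemma prod_hammingPMF {p : ℕ} (m : Fin p → ℕ) (c : Π j : Fin p, Fin (m j)) {n : ℕ}
    (x : Fin n → Π j : Fin p, Fin (m j)) (σ : Fin p → ℝ) :
    ∏ i, hammingPMF m c (x i) σ
      = ∏ j, ((1 + ((m j : ℝ) - 1) * Real.exp (-1 / σ j))⁻¹) ^ n *
          Real.exp (-(((n : ℝ) - (Finset.univ.filter fun i => x i j = c j).card) / σ j)) := by
  have hexponent : ∑ i, -∑ j, (1 - if x i j = c j then (1 : ℝ) else 0) / σ j
      = ∑ j, -(((n : ℝ) - (Finset.univ.filter fun i => x i j = c j).card) / σ j) := by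
    simp only [Finset.sum_neg_distrib, ← sum_one_sub_ite_eq_sub_card, Finset.sum_div]
    rw [Finset.sum_comm]
  simp only [hammingPMF, Finset.prod_mul_distrib, Finset.prod_const, Finset.card_univ,
    Fintype.card_fin]
  rw [← Real.exp_sum, hexponent, Real.exp_sum, ← Finset.prod_inv_distrib, Finset.prod_pow]

lemma setIntegral_univ_pi_prod {ι : Type*} [Fintype ι] {E : ι → Type*}
    [∀ j, MeasureSpace (E j)] [∀ j, SigmaFinite (volume : Measure (E j))]
    (S : ∀ j, Set (E j)) (f : ∀ j, E j → ℝ) :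
    ∫ σ in Set.univ.pi S, ∏ j, f j (σ j) = ∏ j, ∫ t in S j, f j t := by
  rw [volume_pi, Measure.restrict_pi_pi, integral_fintype_prod_eq_prod]

lemma integral_prod_hammingPMF_mul_higPrior {p : ℕ} (m : Fin p → ℕ) (v w : ℝ)
    (c : Π j : Fin p, Fin (m j)) {n : ℕ} (x : Fin n → Π j : Fin p, Fin (m j)) :
    ∫ σ in Set.univ.pi fun _ : Fin p => Set.Ioi (0 : ℝ),
        (∏ i, hammingPMF m c (x i) σ) * ∏ j, higKernel (m j) v w (σ j) / higConst (m j) v w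
      = ∏ j, higConst (m j) (v + (Finset.univ.filter fun i => x i j = c j).card)
          (w + n - (Finset.univ.filter fun i => x i j = c j).card) / higConst (m j) v w := by
  have hposterior : Set.EqOn
      (fun σ : Fin p → ℝ =>
        (∏ i, hammingPMF m c (x i) σ) * ∏ j, higKernel (m j) v w (σ j) / higConst (m j) v w)
      (fun σ => ∏ j, higKernel (m j) (v + (Finset.univ.filter fun i => x i j = c j).card)
          (w + n - (Finset.univ.filter fun i => x i j = c j).card) (σ j) / higConst (m j) v w)
      (Set.univ.pi fun _ => Set.Ioi 0) := by
    intro σ hσ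
    simp only [prod_hammingPMF, ← Finset.prod_mul_distrib, mul_div_assoc']
    refine Finset.prod_congr rfl fun j _ => ?_
    rw [higKernel_conjugate (m j) v w _ n (hσ j (Set.mem_univ j))]
  rw [setIntegral_congr_fun (MeasurableSet.univ_pi fun _ => measurableSet_Ioi) hposterior]
  exact (setIntegral_univ_pi_prod _ _).trans (Finset.prod_congr rfl fun j _ => integral_div _ _)

theorem hamming_marginal_likelihood_general
    (p : ℕ) (m : Fin p → ℕ)
    (v w : ℝ)
    (n : ℕ) (x : Fin n → Π j : Fin p, Fin (m j))
    (q : Π j : Fin p, Fin (m j) → ℝ)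
    (s : (Π j : Fin p, Fin (m j)) → Fin p → ℝ)
    (hs : ∀ c j, s c j = ((Finset.univ.filter fun i => x i j = c j).card : ℝ)) :
    ∑ c : Π j : Fin p, Fin (m j),
        (∏ j : Fin p, q j (c j)) *
          ∫ σ in Set.univ.pi fun _ : Fin p => Set.Ioi (0 : ℝ),
            (∏ i : Fin n, hammingPMF m c (x i) σ) *
              ∏ j : Fin p, higKernel (m j) v w (σ j) / higConst (m j) v w
      = ∑ c : Π j : Fin p, Fin (m j),
          ∏ j : Fin p,
            q j (c j) *
              (higConst (m j) (v + s c j) (w + (n : ℝ) - s c j) / higConst (m j) v w) := by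
  refine Finset.sum_congr rfl fun c _ => ?_
  simp only [integral_prod_hammingPMF_mul_higPrior, hs, Finset.prod_mul_distrib]

/-- Proposition 3: closed form of the marginal likelihood of the data
under independent HIG priors on the scales and a product prior `q` on the center. -/
theorem hamming_marginal_likelihood
    (p : ℕ) (hp : 1 ≤ p) (m : Fin p → ℕ) (hm : ∀ j, 2 ≤ m j)
    (v w : ℝ) (hv : 0 < v) (hw : 0 < w)
    (n : ℕ) (x : Fin n → Π j : Fin p, Fin (m j))
    (q : Π j : Fin p, Fin (m j) → ℝ)
    (hq0 : ∀ j a, 0 ≤ q j a) (hq1 : ∀ j, ∑ a, q j a = 1)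
    (s : (Π j : Fin p, Fin (m j)) → Fin p → ℝ)
    (hs : ∀ c j, s c j = ((Finset.univ.filter fun i => x i j = c j).card : ℝ)) :
    ∑ c : Π j : Fin p, Fin (m j),
        (∏ j : Fin p, q j (c j)) *
          ∫ σ in Set.univ.pi fun _ : Fin p => Set.Ioi (0 : ℝ),
            (∏ i : Fin n, hammingPMF m c (x i) σ) *
              ∏ j : Fin p, higKernel (m j) v w (σ j) / higConst (m j) v w
      = ∑ c : Π j : Fin p, Fin (m j),
          ∏ j : Fin p,
            q j (c j) *
              (higConst (m j) (v + s c j) (w + (n : ℝ) - s c j) / higConst (m j) v w) :=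
  hamming_marginal_likelihood_general p m v w n x q s hs
end

section
/- Let p ≥ 1, m_j ≥ 2 for all j, c ∈ Ω_p, σ_j > 0 for all j, and define the scatter parameters ε_j = (m_j−1)/(exp(1/σ_j) + m_j − 1) ∈ (0,(m_j−1)/m_j). Then for every x ∈ Ω_p the parsimonious latent class kernel coincides with the Hamming p.m.f.: ∏_{j=1}^p (1−ε_j) · [ε_j/((m_j−1)(1−ε_j))]^{1−δ_{c_j}(x_j)} = p(x | c, σ). Hence the Hamming mixture component is exactly the parsimonious latent class component under this reparametrization. -/
/-! With `a = m_j - 1` and `t = 1/σ_j`, the scatter parameter is `ε = a / (eᵗ + a)`, so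
`1 - ε = eᵗ / (eᵗ + a)` is both the modal probability and the inverse normalising factor
`(1 + a e⁻ᵗ)⁻¹` of the Hamming p.m.f., while the odds ratio `ε / (a (1 - ε))` of a non-modal
level is `e⁻ᵗ`. Both p.m.f.s factor over the attributes, so the identity holds factorwise. -/

open Real

section ScatterParameter

variable {a : ℝ} (t : ℝ)

theorem one_sub_div_exp_add (ha : 0 ≤ a) : 1 - a / (exp t + a) = exp t / (exp t + a) := by
  have : exp t + a ≠ 0 := by positivity
  field_simp
  ring

theorem inv_one_add_mul_exp_neg (ha : 0 ≤ a) :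
    (1 + a * exp (-t))⁻¹ = 1 - a / (exp t + a) := by
  have : exp t + a ≠ 0 := by positivity
  rw [one_sub_div_exp_add t ha, exp_neg]
  field_simp

theorem div_exp_add_div_mul_one_sub (ha : 0 < a) :
    a / (exp t + a) / (a * (1 - a / (exp t + a))) = exp (-t) := by
  have : exp t + a ≠ 0 := by positivity
  rw [one_sub_div_exp_add t ha.le, exp_neg]
  field_simp

theorem latentClass_factor_eq (ha : 0 < a) (d : ℝ) :
    (1 - a / (exp t + a)) * (a / (exp t + a) / (a * (1 - a / (exp t + a)))) ^ d
      = (1 + a * exp (-t))⁻¹ * exp (-(d * t)) := by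
  rw [div_exp_add_div_mul_one_sub t ha, inv_one_add_mul_exp_neg t ha.le, ← exp_mul]
  ring_nf

end ScatterParameter

theorem hammingPMF_eq_prod {p : ℕ} (m : Fin p → ℕ) (c x : Π j : Fin p, Fin (m j))
    (σ : Fin p → ℝ) :
    hammingPMF m c x σ = ∏ j : Fin p, (1 + ((m j : ℝ) - 1) * exp (-1 / σ j))⁻¹ *
      exp (-((1 - if x j = c j then (1 : ℝ) else 0) / σ j)) := by
  rw [hammingPMF, ← Finset.prod_inv_distrib, ← Finset.sum_neg_distrib, exp_sum,
    ← Finset.prod_mul_distrib]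

theorem parsimonious_LCM_eq_hammingPMF_general
    (p : ℕ) (m : Fin p → ℕ) (hm : ∀ j, 2 ≤ m j)
    (c : Π j : Fin p, Fin (m j)) (σ : Fin p → ℝ)
    (ε : Fin p → ℝ)
    (hε : ∀ j, ε j = ((m j : ℝ) - 1) / (Real.exp (1 / σ j) + (m j : ℝ) - 1))
    (x : Π j : Fin p, Fin (m j)) :
    ∏ j : Fin p,
        (1 - ε j) *
          (ε j / (((m j : ℝ) - 1) * (1 - ε j))) ^
            (1 - if x j = c j then (1 : ℝ) else 0)
      = hammingPMF m c x σ := by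
  rw [hammingPMF_eq_prod]
  refine Finset.prod_congr rfl fun j _ => ?_
  have hm_sub_one : (0 : ℝ) < (m j : ℝ) - 1 := by
    have : (2 : ℝ) ≤ m j := by exact_mod_cast hm j
    linarith
  rw [hε j, add_sub_assoc, latentClass_factor_eq _ hm_sub_one, neg_div, mul_one_div]

/-- with scatter parameters `ε_j = (m_j−1)/(exp(1/σ_j)+m_j−1)`, the
parsimonious latent class kernel of Celeux–Govaert coincides with the Hamming p.m.f. -/
theorem parsimonious_LCM_eq_hammingPMF
    (p : ℕ) (hp : 1 ≤ p) (m : Fin p → ℕ) (hm : ∀ j, 2 ≤ m j)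
    (c : Π j : Fin p, Fin (m j)) (σ : Fin p → ℝ) (hσ : ∀ j, 0 < σ j)
    (ε : Fin p → ℝ)
    (hε : ∀ j, ε j = ((m j : ℝ) - 1) / (Real.exp (1 / σ j) + (m j : ℝ) - 1))
    (x : Π j : Fin p, Fin (m j)) :
    ∏ j : Fin p,
        (1 - ε j) *
          (ε j / (((m j : ℝ) - 1) * (1 - ε j))) ^
            (1 - if x j = c j then (1 : ℝ) else 0)
      = hammingPMF m c x σ :=
  parsimonious_LCM_eq_hammingPMF_general p m hm c σ ε hε x
end

section
/- Let p ≥ 1 and suppose all attributes have the same number of modalities m ≥ 2, so Ω_p = {1,…,m}^p. Let v, w > 0, c ∈ Ω_p, and let x_1,…,x_n ∈ Ω_p be observations with total Hamming distance D = ∑_{i=1}^n d_H(c, x_i) from the center. Then for every σ > 0, multiplying the HIG prior kernel by the Hamming likelihood with common scale σ yields exactly the HIG kernel with updated parameters: h_{v,w}(σ) · (1 + (m−1)·exp(−1/σ))^{−np} · exp(−D/σ) = h_{v + np − D, w + D}(σ). Hence the full conditional of the common scale parameter σ is HIG(v*, w*) with v* = v + np − ∑_i d_H(c, x_i) and w*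 = w + ∑_i d_H(c, x_i). -/
open Real

theorem higKernel_mul_rpow_mul_exp (m : ℕ) (hm : 1 ≤ m) (v w k D σ : ℝ) :
    higKernel m v w σ * ((1 + ((m : ℝ) - 1) * exp (-1 / σ)) ^ (-k) * exp (-D / σ))
      = higKernel m (v + k - D) (w + D) σ := by
  set A := 1 + ((m : ℝ) - 1) * exp (-1 / σ)
  have hA : 0 < A := by
    have : (0 : ℝ) ≤ m - 1 := sub_nonneg.mpr (by exact_mod_cast hm)
    positivity
  have hpow : A ^ (-(v + w)) * A ^ (-k) = A ^ (-(v + k - D + (w + D))) := by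
    rw [← rpow_add hA]
    ring_nf
  have hexp : exp (-(w + 1) / σ) * exp (-D / σ) = exp (-(w + D + 1) / σ) := by
    rw [← exp_add]
    ring_nf
  unfold higKernel
  calc A ^ (-(v + w)) * exp (-(w + 1) / σ) / σ ^ 2 * (A ^ (-k) * exp (-D / σ))
      = A ^ (-(v + w)) * A ^ (-k) * (exp (-(w + 1) / σ) * exp (-D / σ)) / σ ^ 2 := by ring
    _ = A ^ (-(v + k - D + (w + D))) * exp (-(w + D + 1) / σ) / σ ^ 2 := by rw [hpow, hexp]

theorem higKernel_conjugacy_common_scale_general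
    (m : ℕ) (hm : 2 ≤ m) (v w : ℝ)
    (p : ℕ) (n : ℕ)
    (D : ℝ)
    (σ : ℝ) :
    higKernel m v w σ *
        ((1 + ((m : ℝ) - 1) * Real.exp (-1 / σ)) ^ (-((n : ℝ) * p)) *
          Real.exp (-D / σ))
      = higKernel m (v + (n : ℝ) * p - D) (w + D) σ :=
  higKernel_mul_rpow_mul_exp m (by omega) v w _ D σ

/-- when all attributes share `m` modalities and a common scale `σ`, the
HIG prior kernel times the Hamming likelihood equals the HIG kernel with updated
parameters `v* = v + np − D` and `w* = w + D`, where `D = ∑ᵢ d_H(c, xᵢ)`. -/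
theorem higKernel_conjugacy_common_scale
    (m : ℕ) (hm : 2 ≤ m) (v w : ℝ) (hv : 0 < v) (hw : 0 < w)
    (p : ℕ) (hp : 1 ≤ p) (n : ℕ)
    (c : Fin p → Fin m) (x : Fin n → Fin p → Fin m)
    (D : ℝ) (hD : D = ∑ i : Fin n, (hammingDist c (x i) : ℝ))
    (σ : ℝ) (hσ : 0 < σ) :
    higKernel m v w σ *
        ((1 + ((m : ℝ) - 1) * Real.exp (-1 / σ)) ^ (-((n : ℝ) * p)) *
          Real.exp (-D / σ))
      = higKernel m (v + (n : ℝ) * p - D) (w + D) σ :=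
  higKernel_conjugacy_common_scale_general m hm v w p n D σ
end
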